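/- Let D be a finite type, x : D → ℝ binary, and U : Option D → ℝ. For every w ∈ W(x): F₂(w) ≥ max_{a ∈ A(x)} U a if and only if w maximizes F₂ over W(x) (i.e., F₂(w) ≥ F₂(w') for all w' ∈ W(x)). In other words, the strong-duality inequality of the follower problem is satisfied exactly at its optimal solutions. -/
import Mathlib


noncomputable section

/-- Feasible set `W(x)` of the follower problem. -/
def Wset {D : Type*} [Fintype D] (x : D → ℝ) : Set (Option D → ℝ) :=
  {w | (∀ g, 0 ≤ w g) ∧ (∑ g : Option D, w g = 1) ∧ ∀ d : D, w (some d) ≤ x d}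

/-- Standard simplex `Δ`. -/
def simplex (D : Type*) [Fintype D] : Set (Option D → ℝ) :=
  {w | (∀ g, 0 ≤ w g) ∧ ∑ g : Option D, w g = 1}

/-- The finite set `A(x)` of available options: home delivery (`none`) together with
the open facilities (`some d` with `x d = 1`). -/
def Afin {D : Type*} [Fintype D] [DecidableEq D] (x : D → ℝ) : Finset (Option D) :=
  insert none ((Finset.univ.filter (fun d : D => x d = 1)).image Option.some)

lemma Afin_nonempty {D : Type*} [Fintype D] [DecidableEq D] (x : D → ℝ) :
    (Afin x).Nonempty := Finset.insert_nonempty _ _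

/-- `max_{a ∈ A(x)} U a`. -/
def maxA {D : Type*} [Fintype D] [DecidableEq D] (x : D → ℝ) (U : Option D → ℝ) : ℝ :=
  (Afin x).sup' (Afin_nonempty x) U

/-- Objective `F₁` of the first follower formulation. -/
def F1 {D : Type*} [Fintype D] (U : Option D → ℝ) (x : D → ℝ) (w : Option D → ℝ) : ℝ :=
  ∑ d : D, U (some d) * x d * w (some d) + U none * w none

/-- Objective `F₂` of the second follower formulation. -/
def F2 {D : Type*} [Fintype D] (U : Option D → ℝ) (w : Option D → ℝ) : ℝ :=
  ∑ g : Option D, U g * w g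

/-- Indicator vector `e_a`. -/
def indic {D : Type*} [DecidableEq D] (a : Option D) : Option D → ℝ :=
  fun g => if g = a then 1 else 0


lemma le_maxA_aux {D : Type*} [Fintype D] [DecidableEq D]
    (x : D → ℝ) (hx : ∀ d, x d = 0 ∨ x d = 1) (U : Option D → ℝ)
    (w' : Option D → ℝ) (hw' : w' ∈ Wset x) : F2 U w' ≤ maxA x U := by
  obtain ⟨hpos, hsum, hle⟩ := hw'
  have hzero : ∀ g ∉ Afin x, w' g = 0 := by
    intro g hg
    match g with
    | none => simp [Afin] at hg
    | some d =>
      have hx0 : x d = 0 := by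
        rcases hx d with h | h
        · exact h
        · exact absurd (by simp [Afin, h]) hg
      have := hle d
      have := hpos (some d)
      linarith
  have hsum' : ∑ g ∈ Afin x, w' g = 1 := by
    rw [← hsum]
    exact Finset.sum_subset (Finset.subset_univ _) (fun g _ hg => hzero g hg)
  have hF2 : F2 U w' = ∑ g ∈ Afin x, U g * w' g := by
    unfold F2
    exact (Finset.sum_subset (Finset.subset_univ _)
      (fun g _ hg => by rw [hzero g hg]; ring)).symm
  rw [hF2]
  calc ∑ g ∈ Afin x, U g * w' g ≤ ∑ g ∈ Afin x, maxA x U * w' g := by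
        apply Finset.sum_le_sum
        intro g hg
        exact mul_le_mul_of_nonneg_right (Finset.le_sup' U hg) (hpos g)
    _ = maxA x U := by rw [← Finset.mul_sum, hsum', mul_one]

lemma indic_mem_aux {D : Type*} [Fintype D] [DecidableEq D]
    (x : D → ℝ) (hx : ∀ d, x d = 0 ∨ x d = 1) (a : Option D) (ha : a ∈ Afin x) :
    indic a ∈ Wset x := by
  refine ⟨fun g => ?_, ?_, fun d => ?_⟩
  · unfold indic; positivity
  · simp [indic]
  · unfold indic
    by_cases h : some d = a
    · subst h
      have : x d = 1 := by
        simp [Afin] at ha; exact ha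
      simp [this]
    · rcases hx d with h0 | h0 <;> simp [h, h0]

lemma F2_indic_aux {D : Type*} [Fintype D] [DecidableEq D]
    (U : Option D → ℝ) (a : Option D) : F2 U (indic a) = U a := by
  simp [F2, indic, mul_ite]

theorem stmt17 {D : Type*} [Fintype D] [DecidableEq D]
    (x : D → ℝ) (hx : ∀ d, x d = 0 ∨ x d = 1) (U : Option D → ℝ)
    (w : Option D → ℝ) (hw : w ∈ Wset x) :
    F2 U w ≥ maxA x U ↔ ∀ w' ∈ Wset x, F2 U w' ≤ F2 U w := by
  obtain ⟨a, ha, hae⟩ := Finset.exists_mem_eq_sup' (Afin_nonempty x) U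
  constructor
  · intro h w' hw'
    exact (le_maxA_aux x hx U w' hw').trans h
  · intro h
    have h2 := h (indic a) (indic_mem_aux x hx a ha)
    rw [F2_indic_aux] at h2
    rw [maxA, hae]
    exact h2


end
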